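/- arXiv:1903.02636 — 3 statements merged into one kernel-verified Lean document; each statement's English description precedes it below -/
import Mathlib

section
/- The peakon profile φ(x) = e^{-|x|} satisfies the identity -φ + (1/2)φ² + (3/4)(φ ∗ φ²) = 0 for all x ∈ ℝ, where ∗ denotes convolution on ℝ. -/
open Real MeasureTheory

noncomputable def peakon : ℝ → ℝ := fun x => Real.exp (-|x|)

/-!
For `x ≥ 0` the integrand `φ(x - y) φ(y)²` is a single exponential on each of `(-∞, 0]`,
`[0, x]` and `[x, ∞)`, which gives `(φ ∗ φ²)(x) = (4/3) e^{-x} - (2/3) e^{-2x}`; since `φ` is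
even, so is `φ ∗ φ²`, and the identity is then a polynomial identity in `φ(x)`.
-/

open Set

lemma peakon_neg (x : ℝ) : peakon (-x) = peakon x := by
  simp only [peakon, abs_neg]

lemma peakon_of_nonneg {x : ℝ} (hx : 0 ≤ x) : peakon x = exp (-x) := by
  rw [peakon, abs_of_nonneg hx]

lemma peakon_of_nonpos {x : ℝ} (hx : x ≤ 0) : peakon x = exp x := by
  rw [peakon, abs_of_nonpos hx, neg_neg]

lemma peakon_pos (x : ℝ) : 0 < peakon x := exp_pos _

lemma peakon_le_one (x : ℝ) : peakon x ≤ 1 :=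
  exp_le_one_iff.2 (neg_nonpos.2 (abs_nonneg x))

@[fun_prop]
lemma continuous_peakon : Continuous peakon := by
  unfold peakon
  fun_prop

lemma integrable_peakon : Integrable peakon := by
  have hleft : IntegrableOn peakon (Iic 0) :=
    (integrableOn_exp_mul_Iic one_pos 0).congr_fun
      (fun y hy => by simp [peakon_of_nonpos hy]) measurableSet_Iic
  have hright : IntegrableOn peakon (Ioi 0) :=
    (integrableOn_exp_mul_Ioi neg_one_lt_zero 0).congr_fun
      (fun y hy => by simp [peakon_of_nonneg hy.le]) measurableSet_Ioi
  simpa only [Iic_union_Ioi, integrableOn_univ] using hleft.union hright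

lemma integrable_peakon_sub_mul_sq (x : ℝ) :
    Integrable fun y => peakon (x - y) * peakon y ^ 2 := by
  refine integrable_peakon.mono' (by fun_prop) (ae_of_all _ fun y => ?_)
  rw [Real.norm_of_nonneg (by positivity [peakon_pos (x - y), peakon_pos y])]
  calc peakon (x - y) * peakon y ^ 2 ≤ peakon y ^ 2 :=
        mul_le_of_le_one_left (sq_nonneg _) (peakon_le_one _)
    _ ≤ peakon y := pow_le_of_le_one (peakon_pos y).le (peakon_le_one y) two_ne_zero

section
variable {x y : ℝ}

lemma peakon_sub_mul_sq_of_nonpos (hx : 0 ≤ x) (hy : y ≤ 0) :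
    peakon (x - y) * peakon y ^ 2 = exp (-x) * exp (3 * y) := by
  rw [peakon_of_nonneg (by linarith), peakon_of_nonpos hy, sq, ← exp_add, ← exp_add, ← exp_add]
  ring_nf

lemma peakon_sub_mul_sq_of_mem_Icc (hy : y ∈ Icc 0 x) :
    peakon (x - y) * peakon y ^ 2 = exp (-x) * exp (-y) := by
  rw [peakon_of_nonneg (by linarith [hy.2]), peakon_of_nonneg hy.1, sq, ← exp_add, ← exp_add,
    ← exp_add]
  ring_nf

lemma peakon_sub_mul_sq_of_le (hxy : x ≤ y) (hy : 0 ≤ y) :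
    peakon (x - y) * peakon y ^ 2 = exp x * exp (-3 * y) := by
  rw [peakon_of_nonpos (by linarith), peakon_of_nonneg hy, sq, ← exp_add, ← exp_add, ← exp_add]
  ring_nf

end

lemma integral_peakon_sub_mul_sq_of_nonneg {x : ℝ} (hx : 0 ≤ x) :
    ∫ y, peakon (x - y) * peakon y ^ 2 = 4/3 * peakon x - 2/3 * peakon x ^ 2 := by
  have hint := integrable_peakon_sub_mul_sq x
  have hleft : ∫ y in Iic 0, peakon (x - y) * peakon y ^ 2 = exp (-x) / 3 := by
    rw [setIntegral_congr_fun measurableSet_Iic fun y hy => peakon_sub_mul_sq_of_nonpos hx hy,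
      integral_const_mul, integral_exp_mul_Iic three_pos]
    simp [div_eq_mul_inv]
  have hmiddle : ∫ y in 0..x, peakon (x - y) * peakon y ^ 2 = exp (-x) * (1 - exp (-x)) := by
    rw [intervalIntegral.integral_congr fun y hy => peakon_sub_mul_sq_of_mem_Icc
      (by rwa [uIcc_of_le hx] at hy), intervalIntegral.integral_const_mul]
    simp
  have hright : ∫ y in Ioi x, peakon (x - y) * peakon y ^ 2 = exp (-x) ^ 2 / 3 := by
    rw [setIntegral_congr_fun measurableSet_Ioi fun y hy =>
      peakon_sub_mul_sq_of_le hy.le (hx.trans hy.le),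
      integral_const_mul, integral_exp_mul_Ioi (by norm_num), neg_div_neg_eq, ← mul_div_assoc,
      ← exp_add, sq, ← exp_add]
    ring_nf
  rw [← intervalIntegral.integral_Iic_add_Ioi hint.integrableOn hint.integrableOn,
    ← intervalIntegral.integral_interval_add_Ioi hint.integrableOn hint.integrableOn,
    hleft, hmiddle, hright, peakon_of_nonneg hx]
  ring

lemma integral_peakon_sub_mul_sq (x : ℝ) :
    ∫ y, peakon (x - y) * peakon y ^ 2 = 4/3 * peakon x - 2/3 * peakon x ^ 2 := by
  rcases le_total 0 x with hx | hx
  · exact integral_peakon_sub_mul_sq_of_nonneg hx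
  · calc ∫ y, peakon (x - y) * peakon y ^ 2 = ∫ y, peakon (-x - y) * peakon y ^ 2 := by
          rw [← integral_neg_eq_self]
          congr 1 with y
          rw [peakon_neg y, ← peakon_neg (x - -y)]
          ring_nf
      _ = 4/3 * peakon x - 2/3 * peakon x ^ 2 := by
          rw [integral_peakon_sub_mul_sq_of_nonneg (neg_nonneg.2 hx), peakon_neg]

theorem peakon_identity (x : ℝ) :
    -peakon x + (1/2) * (peakon x)^2
      + (3/4) * ∫ y : ℝ, peakon (x - y) * (peakon y)^2 = 0 := by
  rw [integral_peakon_sub_mul_sq]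
  ring
end

section
/- Let s > 0, v₀(s), w₀(s) be real numbers. The function V(t) = v₀(s) + w₀(s)·((e^t − 1)e^{−s})/(1 + (e^t − 1)e^{−s}) solves the initial value problem dV/dt = φ(X(t,s)) W(t), V(0) = v₀(s), where X(t,s) = log(1 + (e^s − 1)e^{−t}), W(t) = w₀(s)/(1 + (e^t − 1)e^{−s}), and φ(x) = e^{−x} for x > 0. -/
open Real

noncomputable def charX (t s : ℝ) : ℝ :=
  Real.log (1 + (Real.exp s - 1) * Real.exp (-t))

/-! Both the denominator of `W` and `exp (charX t s)` are multiples of `exp s + exp t - 1`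
(by `exp (-s)` and `exp (-t)` respectively), which gives
`exp (-charX t s) = g' t / (1 + g t)` with `g t = (exp t - 1) * exp (-s)`. Since
`V = v₀ + w₀ g / (1 + g)` and `(g / (1 + g))' = g' / (1 + g) ^ 2`, the equation `V' = φ(X) W`
follows. -/

theorem HasDerivAt.const_mul_div_one_add {𝕜 : Type*} [NontriviallyNormedField 𝕜]
    {f : 𝕜 → 𝕜} {f' x : 𝕜} (c : 𝕜) (hf : HasDerivAt f f' x) (hx : 1 + f x ≠ 0) :
    HasDerivAt (fun y => c * f y / (1 + f y)) (c * f' / (1 + f x) ^ 2) x :=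
  ((hf.const_mul c).div (hf.const_add 1) hx).congr_deriv (by ring)

lemma one_add_exp_sub_one_mul_exp_neg_pos_of_nonneg_left {a : ℝ} (ha : 0 ≤ a) (b : ℝ) :
    0 < 1 + (exp a - 1) * exp (-b) := by
  have : 0 ≤ exp a - 1 := by linarith [one_le_exp ha]
  positivity

lemma one_add_exp_sub_one_mul_exp_neg_pos_of_nonneg_right (a : ℝ) {b : ℝ} (hb : 0 ≤ b) :
    0 < 1 + (exp a - 1) * exp (-b) := by
  have : exp (-b) ≤ 1 := exp_le_one_iff.mpr (neg_nonpos.mpr hb)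
  nlinarith [exp_pos a, exp_pos (-b)]

lemma exp_neg_charX (t : ℝ) {s : ℝ} (hs : 0 ≤ s) :
    exp (-charX t s) = exp t * exp (-s) / (1 + (exp t - 1) * exp (-s)) := by
  have hX := one_add_exp_sub_one_mul_exp_neg_pos_of_nonneg_left hs t
  rw [charX, exp_neg, exp_log hX, exp_neg t, exp_neg s]
  field_simp
  ring

theorem V_solves_linearized (s : ℝ) (hs : 0 < s) (v₀s w₀s : ℝ) :
    let W : ℝ → ℝ := fun t => w₀s / (1 + (Real.exp t - 1) * Real.exp (-s))
    let V : ℝ → ℝ := fun t => v₀s +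
      w₀s * ((Real.exp t - 1) * Real.exp (-s)) / (1 + (Real.exp t - 1) * Real.exp (-s))
    (V 0 = v₀s) ∧
    (∀ t : ℝ, HasDerivAt V (Real.exp (-(charX t s)) * W t) t) := by
  intro W V
  refine ⟨by simp [V], fun t => ?_⟩
  have hD := one_add_exp_sub_one_mul_exp_neg_pos_of_nonneg_right t hs.le
  have hg : HasDerivAt (fun t => (exp t - 1) * exp (-s)) (exp t * exp (-s)) t :=
    ((hasDerivAt_exp t).sub_const 1).mul_const _
  refine ((hg.const_mul_div_one_add w₀s hD.ne').const_add v₀s).congr_deriv ?_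
  rw [exp_neg_charX t hs.le]
  simp only [W]
  field_simp
end

section
/- Suppose V₀, U₀ : [0,T) → ℝ are C¹ functions satisfying the differential inequality d/dt(V₀ + U₀) ≤ (V₀ + U₀) + V₀², with |V₀(t)| < ε for all t ∈ [0,T), V₀(0) + U₀(0) ≤ −2ε². Then V₀(t) + U₀(t) ≤ −ε² e^t for all t ∈ [0,T); in particular, if T > log 2 − 2 log ε then there exists t₀ ∈ (0,T) with |U₀(t₀)| > 1. -/
open Real Set

/-!
Since `V₀² < ε²`, the sum `W = V₀ + U₀` satisfies `W' ≤ W + ε²`, so Grönwall gives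
`W t + ε² ≤ (W 0 + ε²) eᵗ ≤ -ε² eᵗ`. Once `ε² eᵗ > 2`, the bound `|V₀| < ε` forces `U₀ < -1`.
-/

theorem add_le_mul_exp_of_deriv_le_add {f : ℝ → ℝ} {a b c : ℝ}
    (hf : ∀ t ∈ Ico a b, DifferentiableAt ℝ f t)
    (hbound : ∀ t ∈ Ico a b, deriv f t ≤ f t + c) :
    ∀ t ∈ Ico a b, f t + c ≤ (f a + c) * exp (t - a) := by
  intro t ht
  have hsub : Icc a t ⊆ Ico a b := Icc_subset_Ico_right ht.2
  have hgronwall : f t ≤ gronwallBound (f a) 1 c (t - a) := by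
    refine le_gronwallBound_of_liminf_deriv_right_le (f' := deriv f)
      (fun x hx => (hf x (hsub hx)).continuousAt.continuousWithinAt)
      (fun x hx r hr => ?_) le_rfl ?_ t (right_mem_Icc.2 ht.1)
    · exact (hf x (hsub (Ico_subset_Icc_self hx))).hasDerivAt.hasDerivWithinAt.liminf_right_slope_le hr
    · intro x hx
      simpa using hbound x (hsub (Ico_subset_Icc_self hx))
  rw [gronwallBound_of_K_ne_0 one_ne_zero] at hgronwall
  simp only [one_mul, div_one] at hgronwall
  linarith

theorem two_lt_sq_mul_exp {ε t : ℝ} (hε : 0 < ε) (ht : log 2 - 2 * log ε < t) :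
    2 < ε ^ 2 * exp t := by
  have hε2 : 0 < ε ^ 2 := by positivity
  have hexp : exp (log 2 - 2 * log ε) = 2 / ε ^ 2 := by
    rw [exp_sub, exp_log two_pos, ← log_rpow hε, exp_log (by positivity), rpow_two]
  rw [← div_lt_iff₀' hε2, ← hexp]
  exact exp_lt_exp.2 ht

theorem gronwall_instability (T ε : ℝ) (hT : 0 < T) (hε : 0 < ε)
    (V₀ U₀ : ℝ → ℝ)
    (hV : ∀ t ∈ Set.Ico (0:ℝ) T, DifferentiableAt ℝ V₀ t)
    (hU : ∀ t ∈ Set.Ico (0:ℝ) T, DifferentiableAt ℝ U₀ t)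
    (hineq : ∀ t ∈ Set.Ico (0:ℝ) T,
      deriv (fun τ => V₀ τ + U₀ τ) t ≤ (V₀ t + U₀ t) + (V₀ t)^2)
    (hVsmall : ∀ t ∈ Set.Ico (0:ℝ) T, |V₀ t| < ε)
    (hinit : V₀ 0 + U₀ 0 ≤ -2 * ε^2) :
    (∀ t ∈ Set.Ico (0:ℝ) T, V₀ t + U₀ t ≤ -ε^2 * Real.exp t) ∧
    (Real.log 2 - 2 * Real.log ε < T →
      ∃ t₀ ∈ Set.Ioo (0:ℝ) T, 1 < |U₀ t₀|) := by
  have hsum_bound : ∀ t ∈ Ico 0 T, V₀ t + U₀ t + ε ^ 2 ≤ -ε ^ 2 * exp t := by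
    intro t ht
    have hgronwall := add_le_mul_exp_of_deriv_le_add (f := fun τ => V₀ τ + U₀ τ) (c := ε ^ 2)
      (fun t ht => (hV t ht).add (hU t ht))
      (fun t ht => (hineq t ht).trans (by nlinarith [abs_lt.1 (hVsmall t ht)])) t ht
    simp only [sub_zero] at hgronwall
    nlinarith [exp_pos t]
  refine ⟨fun t ht => by nlinarith [hsum_bound t ht], fun hL => ?_⟩
  obtain ⟨t₀, hLt₀, ht₀T⟩ := exists_between (max_lt hT hL)
  have ht₀ : t₀ ∈ Ioo 0 T := ⟨(le_max_left _ _).trans_lt hLt₀, ht₀T⟩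
  have h2 := two_lt_sq_mul_exp hε ((le_max_right _ _).trans_lt hLt₀)
  have hV₀ := abs_lt.1 (hVsmall t₀ (Ioo_subset_Ico_self ht₀))
  refine ⟨t₀, ht₀, lt_abs.2 (Or.inr ?_)⟩
  nlinarith [hsum_bound t₀ (Ioo_subset_Ico_self ht₀), sq_nonneg (ε - 1)]
end
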